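/- arXiv:1508.07983 — 2 statements merged into one kernel-verified Lean document; each statement's English description precedes it below -/
import Mathlib

section
/- Let (E, τ) be a bornological ordered locally convex space with an order bounded τ-neighborhood of zero. Then E is order bornological. -/
open Topology Filter Set Pointwise LatticeOrderedAddCommGroup

variable {E : Type*} {E₁ : Type*} {E₂ : Type*}

/-- A set is order bounded if it is contained in some order interval. -/
def OrderBounded [Preorder E] (s : Set E) : Prop := ∃ x y : E, s ⊆ Set.Icc x y

/-- A set `B` is order bornivorous if it absorbs every order bounded set. -/
def OrderBornivorous [Preorder E] [SMul ℝ E] (B : Set E) : Prop :=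
  ∀ D : Set E, OrderBounded D → Absorbs ℝ B D

/-- A topology is locally solid if every neighborhood of zero contains a solid
neighborhood of zero. -/
def LocallySolid (E : Type*) [Lattice E] [AddCommGroup E] [TopologicalSpace E] : Prop :=
  ∀ V ∈ 𝓝 (0 : E), ∃ S ∈ 𝓝 (0 : E), S ⊆ V ∧ IsSolid S

/- With an order bounded zero-neighbourhood `V ⊆ [x, y]`, every von Neumann bounded set lies in
some `r • V ⊆ [r • x, r • y]`, so it is order bounded. An order bornivorous set is therefore
bornivorous, and bornologicality makes it a zero-neighbourhood. -/

theorem OrderBounded.mono [Preorder E] {s t : Set E} (ht : OrderBounded t) (hst : s ⊆ t) :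
    OrderBounded s :=
  let ⟨x, y, hxy⟩ := ht
  ⟨x, y, hst.trans hxy⟩

theorem OrderBounded.smul_set [Preorder E] [Zero E] [SMul ℝ E] [PosSMulMono ℝ E]
    {s : Set E} (hs : OrderBounded s) {r : ℝ} (hr : 0 ≤ r) : OrderBounded (r • s) := by
  obtain ⟨x, y, hxy⟩ := hs
  refine ⟨r • x, r • y, ?_⟩
  rintro _ ⟨v, hv, rfl⟩
  exact ⟨smul_le_smul_of_nonneg_left (hxy hv).1 hr, smul_le_smul_of_nonneg_left (hxy hv).2 hr⟩

theorem Bornology.IsVonNBounded.orderBounded [Preorder E] [Zero E] [SMul ℝ E] [PosSMulMono ℝ E]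
    [TopologicalSpace E] {V D : Set E} (hD : Bornology.IsVonNBounded ℝ D) (hV : V ∈ 𝓝 0)
    (hVb : OrderBounded V) : OrderBounded D := by
  obtain ⟨r, hr, hDV⟩ := (hD hV).exists_pos
  exact (hVb.smul_set hr.le).mono (hDV r (Real.norm_of_nonneg hr.le).ge)

theorem OrderBornivorous.absorbs_of_isVonNBounded [Preorder E] [Zero E] [SMul ℝ E]
    [PosSMulMono ℝ E] [TopologicalSpace E] {B V D : Set E} (hB : OrderBornivorous B)
    (hV : V ∈ 𝓝 0) (hVb : OrderBounded V) (hD : Bornology.IsVonNBounded ℝ D) : Absorbs ℝ B D :=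
  hB D (hD.orderBounded hV hVb)

theorem orderBornological_of_bornological_orderBounded_nhd_general
    [AddCommGroup E] [PartialOrder E]
    [Module ℝ E] [PosSMulMono ℝ E]
    [TopologicalSpace E]
    (hV : ∃ V ∈ 𝓝 (0 : E), OrderBounded V)
    (hborn : ∀ B : Set E, (∀ D : Set E, Bornology.IsVonNBounded ℝ D → Absorbs ℝ B D) →
      Balanced ℝ B → Convex ℝ B → B ∈ 𝓝 (0 : E))
    (B : Set E) (hob : OrderBornivorous B) (hbal : Balanced ℝ B) (hconv : Convex ℝ B) :
    B ∈ 𝓝 (0 : E) := by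
  obtain ⟨V, hV0, hVb⟩ := hV
  exact hborn B (fun _ hD => hob.absorbs_of_isVonNBounded hV0 hVb hD) hbal hconv

theorem orderBornological_of_bornological_orderBounded_nhd
    [AddCommGroup E] [PartialOrder E] [CovariantClass E E (· + ·) (· ≤ ·)]
    [Module ℝ E] [PosSMulMono ℝ E]
    [TopologicalSpace E] [IsTopologicalAddGroup E] [ContinuousSMul ℝ E]
    [LocallyConvexSpace ℝ E]
    (hV : ∃ V ∈ 𝓝 (0 : E), OrderBounded V)
    (hborn : ∀ B : Set E, (∀ D : Set E, Bornology.IsVonNBounded ℝ D → Absorbs ℝ B D) →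
      Balanced ℝ B → Convex ℝ B → B ∈ 𝓝 (0 : E))
    (B : Set E) (hob : OrderBornivorous B) (hbal : Balanced ℝ B) (hconv : Convex ℝ B) :
    B ∈ 𝓝 (0 : E) :=
  orderBornological_of_bornological_orderBounded_nhd_general hV hborn B hob hbal hconv
end

section
/- Let E be a Riesz space. The collection τ_ob of all order bornivorous, balanced, convex subsets of E forms a neighborhood base at zero for a locally convex vector topology on E, and (E, τ_ob) is order bornological. -/
open Topology Filter Set Pointwise LatticeOrderedAddCommGroup

variable {E : Type*} {E₁ : Type*} {E₂ : Type*}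

/-!
Singletons are order bounded, so order bornivorous sets are absorbent; and absorbing a set
survives finite intersections and nonzero dilations. Any such family of absorbent balanced
convex sets is a basis at zero of a locally convex vector topology: `½U + ½U = U` gives
continuity of addition, balancedness (`‖c‖ ≤ 1 ⇒ c • U ⊆ U`) continuity of scalar
multiplication at the origin, and absorbency continuity in the scalar variable.
-/

lemma Absorbs.smul_set_of_ne_zero {𝕜 : Type*} [NormedDivisionRing 𝕜] [MulAction 𝕜 E]
    {s t : Set E} (h : Absorbs 𝕜 s t) {c : 𝕜} (hc : c ≠ 0) : Absorbs 𝕜 (c • s) t :=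
  ((tendsto_mul_right_cobounded hc).eventually h).mono fun _ ha => by rwa [smul_smul]

lemma Convex.inv_two_smul_add_inv_two_smul [AddCommGroup E] [Module ℝ E] {U : Set E}
    (hU : Convex ℝ U) : (2⁻¹ : ℝ) • U + (2⁻¹ : ℝ) • U = U := by
  rw [← hU.add_smul (by norm_num) (by norm_num)]
  norm_num

section DiskBasis

variable [AddCommGroup E] [Module ℝ E]

def moduleFilterBasisOfAbsorbentBalancedConvex (𝓑 : Set (Set E)) (h_nonempty : 𝓑.Nonempty)
    (h_inter : ∀ U ∈ 𝓑, ∀ V ∈ 𝓑, U ∩ V ∈ 𝓑) (h_smul : ∀ U ∈ 𝓑, ∀ c : ℝ, c ≠ 0 → c • U ∈ 𝓑)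
    (h_absorbent : ∀ U ∈ 𝓑, Absorbent ℝ U) (h_balanced : ∀ U ∈ 𝓑, Balanced ℝ U)
    (h_convex : ∀ U ∈ 𝓑, Convex ℝ U) : ModuleFilterBasis ℝ E where
  toAddGroupFilterBasis := addGroupFilterBasisOfComm 𝓑 h_nonempty
    (fun U V hU hV => ⟨U ∩ V, h_inter U hU V hV, subset_rfl⟩)
    (fun U hU => (h_absorbent U hU).zero_mem)
    (fun U hU => ⟨(2⁻¹ : ℝ) • U, h_smul U hU _ (by norm_num),
      (h_convex U hU).inv_two_smul_add_inv_two_smul.subset⟩)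
    (fun U hU => ⟨U, hU, fun _ hx => (h_balanced U hU).neg_mem_iff.2 hx⟩)
  smul' {U} hU := ⟨Metric.closedBall 0 1, Metric.closedBall_mem_nhds 0 one_pos, U, hU,
    balanced_iff_closedBall_smul.1 (h_balanced U hU)⟩
  smul_left' x₀ {U} hU := by
    rcases eq_or_ne x₀ 0 with rfl | hx₀
    · exact ⟨U, hU, fun _ _ => by simpa using (h_absorbent U hU).zero_mem⟩
    · exact ⟨x₀⁻¹ • U, h_smul U hU _ (inv_ne_zero hx₀), (preimage_smul₀ hx₀ U).superset⟩
  smul_right' m₀ {U} hU :=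
    (((h_absorbent U hU) m₀).eventually_nhds_zero (h_absorbent U hU).zero_mem).mono
      fun _ hc => hc rfl

end DiskBasis

lemma orderBounded_singleton [Preorder E] (x : E) : OrderBounded ({x} : Set E) :=
  ⟨x, x, by simp⟩

section OrderBornivorous

variable [Preorder E] [AddCommGroup E] [Module ℝ E] {B C : Set E}

lemma orderBornivorous_univ : OrderBornivorous (univ : Set E) := fun _ _ => .univ

lemma OrderBornivorous.inter (hB : OrderBornivorous B) (hC : OrderBornivorous C) :
    OrderBornivorous (B ∩ C) :=
  fun D hD => (hB D hD).inter (hC D hD)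

lemma OrderBornivorous.smul (hB : OrderBornivorous B) {c : ℝ} (hc : c ≠ 0) :
    OrderBornivorous (c • B) :=
  fun D hD => (hB D hD).smul_set_of_ne_zero hc

lemma OrderBornivorous.absorbent (hB : OrderBornivorous B) : Absorbent ℝ B :=
  fun x => hB {x} (orderBounded_singleton x)

variable (E) in
def orderBornivorousModuleFilterBasis : ModuleFilterBasis ℝ E :=
  moduleFilterBasisOfAbsorbentBalancedConvex
    {B | OrderBornivorous B ∧ Balanced ℝ B ∧ Convex ℝ B}
    ⟨univ, orderBornivorous_univ, balanced_univ, convex_univ⟩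
    (fun _ hU _ hV => ⟨hU.1.inter hV.1, hU.2.1.inter hV.2.1, hU.2.2.inter hV.2.2⟩)
    (fun _ hU _ hc => ⟨hU.1.smul hc, hU.2.1.smul _, hU.2.2.smul _⟩)
    (fun _ hU => hU.1.absorbent) (fun _ hU => hU.2.1) (fun _ hU => hU.2.2)

end OrderBornivorous

theorem orderBornivorous_sets_form_topology_general
    [Lattice E] [AddCommGroup E]
    [Module ℝ E] :
    ∃ t : TopologicalSpace E,
      @IsTopologicalAddGroup E t _ ∧
      @ContinuousSMul ℝ E _ _ t ∧
      @LocallyConvexSpace ℝ E _ _ _ _ t ∧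
      (@nhds E t 0).HasBasis
        (fun B : Set E => OrderBornivorous B ∧ Balanced ℝ B ∧ Convex ℝ B) id ∧
      (∀ B : Set E, OrderBornivorous B → Balanced ℝ B → Convex ℝ B →
        B ∈ @nhds E t 0) := by
  let 𝓑 := orderBornivorousModuleFilterBasis E
  let := 𝓑.topology
  have hbasis := 𝓑.toAddGroupFilterBasis.nhds_zero_hasBasis
  exact ⟨𝓑.topology, inferInstance, inferInstance,
    .ofBasisZero ℝ E _ _ hbasis fun _ hB => hB.2.2, hbasis,
    fun _ hB₁ hB₂ hB₃ => hbasis.mem_of_mem ⟨hB₁, hB₂, hB₃⟩⟩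

theorem orderBornivorous_sets_form_topology
    [Lattice E] [AddCommGroup E] [CovariantClass E E (· + ·) (· ≤ ·)]
    [Module ℝ E] [PosSMulMono ℝ E] :
    ∃ t : TopologicalSpace E,
      @IsTopologicalAddGroup E t _ ∧
      @ContinuousSMul ℝ E _ _ t ∧
      @LocallyConvexSpace ℝ E _ _ _ _ t ∧
      (@nhds E t 0).HasBasis
        (fun B : Set E => OrderBornivorous B ∧ Balanced ℝ B ∧ Convex ℝ B) id ∧
      (∀ B : Set E, OrderBornivorous B → Balanced ℝ B → Convex ℝ B →
        B ∈ @nhds E t 0) :=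
  orderBornivorous_sets_form_topology_general
end
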